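/- Let n ≥ 5 be odd and let φ = (0,0,1) ∈ ℂ³. With B_j := (−1)^j (2|ψ_j⟩⟨ψ_j| − I), one has ⟨φ| Σ_{j=0}^{n-2} B_j B_{j+1} − B_{n-1} B_0 |φ⟩ = 4n·cos(π/n)/(1+cos(π/n)) − n, and this value is strictly greater than n − 2. -/

import Mathlib

/-!
With `c = cos (π / n)` and `θ = (n - 1) π / n` one has `⟨ψ_j, ψ_k⟩ = (cos ((j - k) θ) + c) / (1 + c)`
and `cos θ = -c`, so consecutive vectors `ψ_j, ψ_{j+1}` are orthogonal, and so are `ψ_{n-1}, ψ_0`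
because `n` is odd. For orthogonal `u, v` the reflections `R_u = 2 u u* - 1` satisfy
`R_u R_v = 1 - 2 u u* - 2 v v*`, so each of the `n` terms has expectation
`±(1 - 4 |⟨φ, ψ_j⟩|²) = ±(1 - 4c / (1 + c))` in `φ`, and the signs `(-1)^(j+k)` turn all of them into
`4c / (1 + c) - 1`.
The inequality amounts to `cos (π / n) > (n - 1) / (n + 1)`, which follows from
`cos x > 1 - x² / 2` and `π² < 10` once `n ≥ 5`.
-/

open Real Matrix

section Reflection

variable {m R : Type*} [Fintype m] [DecidableEq m] [Ring R] [Star R]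

def reflection (u : m → R) : Matrix m m R :=
  2 • vecMulVec u (star u) - 1

theorem reflection_mul_reflection {u v : m → R} (h : star u ⬝ᵥ v = 0) :
    reflection u * reflection v = 1 - 2 • vecMulVec u (star u) - 2 • vecMulVec v (star v) := by
  have hzero : vecMulVec u (star u) * vecMulVec v (star v) = 0 := by
    rw [vecMulVec_mul_vecMulVec, h, zero_smul]
    ext i j
    simp [vecMulVec_apply]
  simp only [reflection, sub_mul, mul_sub, smul_mul_smul_comm, hzero, smul_zero, mul_one, one_mul]
  abel

end Reflection

theorem one_sub_two_nsmul_vecMulVec_sub_apply_self {m R : Type*} [DecidableEq m] [Ring R]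
    (u w v x : m → R) (i : m) :
    (1 - 2 • vecMulVec u w - 2 • vecMulVec v x : Matrix m m R) i i
      = 1 - 2 * (u i * w i) - 2 * (v i * x i) := by
  simp [vecMulVec_apply, two_mul]

theorem star_vecCons_dotProduct_mulVec (M : Matrix (Fin 3) (Fin 3) ℂ) :
    star ![0, 0, 1] ⬝ᵥ M *ᵥ ![0, 0, 1] = M 2 2 := by
  simp [dotProduct, mulVec, Fin.sum_univ_three]

/-- `ψ_j` of the `n`-cycle is `cycleVector (cos (π / n)) ((n - 1) * π / n) j`. -/
noncomputable def cycleVector (c θ : ℝ) (j : ℕ) : Fin 3 → ℂ :=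
  (1 / √(1 + c) : ℝ) • ![(Real.cos (j * θ) : ℂ), (Real.sin (j * θ) : ℂ), (√c : ℂ)]

section CycleVector

variable {c θ : ℝ}

theorem star_cycleVector_dotProduct (hc : 0 ≤ c) (j k : ℕ) :
    star (cycleVector c θ j) ⬝ᵥ cycleVector c θ k
      = ((Real.cos ((j - k : ℝ) * θ) + c) / (1 + c) : ℝ) := by
  have hs : √(1 + c) ^ 2 = 1 + c := Real.sq_sqrt (by linarith)
  have hc' : √c ^ 2 = c := Real.sq_sqrt hc
  simp only [cycleVector, dotProduct, Fin.sum_univ_three, Pi.star_apply, Pi.smul_apply,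
    Complex.real_smul, star_mul', Complex.star_def, Complex.conj_ofReal, cons_val_zero,
    cons_val_one, cons_val_two, head_cons, tail_cons]
  rw [sub_mul, Real.cos_sub]
  norm_cast
  field_simp
  rw [hs, hc']

theorem star_cycleVector_dotProduct_eq_zero (hc : 0 ≤ c) {j k : ℕ}
    (h : Real.cos ((j - k : ℝ) * θ) = -c) :
    star (cycleVector c θ j) ⬝ᵥ cycleVector c θ k = 0 := by
  rw [star_cycleVector_dotProduct hc, h, neg_add_cancel, zero_div, Complex.ofReal_zero]

theorem cycleVector_two_mul_star (hc : 0 ≤ c) (j : ℕ) :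
    cycleVector c θ j 2 * star (cycleVector c θ j 2) = ((c / (1 + c) : ℝ) : ℂ) := by
  have hs : √(1 + c) ^ 2 = 1 + c := Real.sq_sqrt (by linarith)
  have hc' : √c ^ 2 = c := Real.sq_sqrt hc
  have hreal : 1 / √(1 + c) * √c * (1 / √(1 + c) * √c) = c / (1 + c) := by
    field_simp
    rw [hs, hc']
    ring
  simp only [cycleVector, Pi.smul_apply, Complex.real_smul, star_mul', Complex.star_def,
    Complex.conj_ofReal, cons_val_two, tail_cons, head_cons]
  exact_mod_cast hreal

theorem star_dotProduct_reflection_mul_reflection_cycleVector_mulVec (hc : 0 ≤ c) {j k : ℕ}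
    (h : Real.cos ((j - k : ℝ) * θ) = -c) :
    star ![0, 0, 1] ⬝ᵥ (reflection (cycleVector c θ j) * reflection (cycleVector c θ k))
      *ᵥ ![0, 0, 1] = ((1 - 4 * c / (1 + c) : ℝ) : ℂ) := by
  rw [reflection_mul_reflection (star_cycleVector_dotProduct_eq_zero hc h),
    star_vecCons_dotProduct_mulVec, one_sub_two_nsmul_vecMulVec_sub_apply_self, Pi.star_apply,
    Pi.star_apply, cycleVector_two_mul_star hc, cycleVector_two_mul_star hc]
  push_cast
  ring

end CycleVector

theorem cos_sub_one_mul_pi_div {n : ℕ} (hn : n ≠ 0) :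
    Real.cos ((n - 1) * π / n) = -Real.cos (π / n) := by
  rw [← Real.cos_pi_sub]
  congr 1
  field_simp

theorem cos_pred_mul_sub_one_mul_pi_div {n : ℕ} (hodd : Odd n) :
    Real.cos (((n - 1 : ℕ) : ℝ) * ((n - 1) * π / n)) = -Real.cos (π / n) := by
  obtain ⟨m, hm⟩ := hodd
  have hmR : (n : ℝ) = 2 * m + 1 := by exact_mod_cast hm
  have harg : ((n - 1 : ℕ) : ℝ) * ((n - 1) * π / n) = (π / n - π) + (m : ℤ) * (2 * π) := by
    rw [Nat.cast_sub (by omega), hmR]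
    push_cast
    field_simp
    ring
  rw [harg, Real.cos_add_int_mul_two_pi, Real.cos_sub_pi]

theorem sub_one_div_add_one_lt_cos_pi_div {n : ℕ} (hn : 5 ≤ n) :
    ((n : ℝ) - 1) / (n + 1) < Real.cos (π / n) := by
  have hn' : (5 : ℝ) ≤ n := by exact_mod_cast hn
  have hpi : π ^ 2 < 10 := by nlinarith [Real.pi_lt_d2, Real.pi_pos]
  have hsq : (π / n) ^ 2 / 2 ≤ 2 / (n + 1) := by
    rw [div_pow, div_div, div_le_div_iff₀ (by positivity) (by positivity)]
    nlinarith
  calc ((n : ℝ) - 1) / (n + 1) = 1 - 2 / (n + 1) := by field_simp; ring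
    _ ≤ 1 - (π / n) ^ 2 / 2 := by linarith
    _ < Real.cos (π / n) := Real.one_sub_sq_div_two_lt_cos (by positivity)

theorem sub_two_lt_four_mul_cos_pi_div_sub {n : ℕ} (hn : 5 ≤ n) :
    (n : ℝ) - 2 < 4 * n * Real.cos (π / n) / (1 + Real.cos (π / n)) - n := by
  have hcos := sub_one_div_add_one_lt_cos_pi_div hn
  have hn' : (5 : ℝ) ≤ n := by exact_mod_cast hn
  rw [div_lt_iff₀ (by positivity)] at hcos
  have hc : 0 < Real.cos (π / n) := by nlinarith
  rw [lt_sub_iff_add_lt, lt_div_iff₀ (by positivity)]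
  nlinarith

theorem stmt_4 (n : ℕ) (hn : 5 ≤ n) (hodd : Odd n) (ψ : ℕ → Fin 3 → ℂ)
    (hψ : ∀ j : ℕ, ψ j = (1 / Real.sqrt (1 + Real.cos (π / n)) : ℝ) •
      (![(Real.cos (j * ((n - 1) * π / n)) : ℂ), (Real.sin (j * ((n - 1) * π / n)) : ℂ),
        (Real.sqrt (Real.cos (π / n)) : ℂ)]))
    (B : ℕ → Matrix (Fin 3) (Fin 3) ℂ)
    (hB : ∀ j : ℕ, B j = ((-1 : ℂ) ^ j) • (2 • Matrix.vecMulVec (ψ j) (star (ψ j)) - 1))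
    (φ : Fin 3 → ℂ) (hφ : φ = ![0, 0, 1]) :
    star φ ⬝ᵥ ((∑ j ∈ Finset.range (n - 1), B j * B (j + 1)) - B (n - 1) * B 0).mulVec φ
      = ((4 * n * Real.cos (π / n) / (1 + Real.cos (π / n)) - n : ℝ) : ℂ) ∧
    (4 * n * Real.cos (π / n) / (1 + Real.cos (π / n)) - n : ℝ) > (n : ℝ) - 2 := by
  refine ⟨?_, sub_two_lt_four_mul_cos_pi_div_sub hn⟩
  set c := Real.cos (π / n)
  set θ : ℝ := (n - 1) * π / n
  have hc : 0 ≤ c := by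
    have hn1 : (1 : ℝ) ≤ n := by exact_mod_cast (by omega : 1 ≤ n)
    exact (div_nonneg (sub_nonneg.2 hn1) (by positivity)).trans
      (sub_one_div_add_one_lt_cos_pi_div hn).le
  have hψc : ψ = cycleVector c θ := funext hψ
  subst hψc hφ
  have hpair : ∀ j k : ℕ, Real.cos ((j - k : ℝ) * θ) = -c →
      star ![0, 0, 1] ⬝ᵥ (B j * B k) *ᵥ ![0, 0, 1]
        = (-1) ^ (j + k) * ((1 - 4 * c / (1 + c) : ℝ) : ℂ) := fun j k h => by
    rw [hB, hB, smul_mul_smul_comm, ← pow_add, smul_mulVec, dotProduct_smul, smul_eq_mul]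
    exact congrArg _ (star_dotProduct_reflection_mul_reflection_cycleVector_mulVec hc h)
  have hadj (j : ℕ) : Real.cos ((j - (j + 1 : ℕ) : ℝ) * θ) = -c := by
    rw [Nat.cast_succ, sub_add_cancel_left, neg_one_mul, Real.cos_neg,
      cos_sub_one_mul_pi_div (by omega)]
  have hwrap : Real.cos (((n - 1 : ℕ) - (0 : ℕ) : ℝ) * θ) = -c := by
    rw [Nat.cast_zero, sub_zero, cos_pred_mul_sub_one_mul_pi_div hodd]
  rw [sub_mulVec, dotProduct_sub, sum_mulVec, dotProduct_sum,
    Finset.sum_congr rfl fun j _ => hpair j (j + 1) (hadj j), hpair (n - 1) 0 hwrap,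
    Finset.sum_congr rfl fun j _ => by rw [Odd.neg_one_pow ⟨j, by ring⟩],
    Nat.add_zero, (Nat.Odd.sub_odd hodd odd_one).neg_one_pow, Finset.sum_const,
    Finset.card_range, nsmul_eq_mul, Nat.cast_sub (by omega : 1 ≤ n)]
  push_cast
  ring
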